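/- Fix an integer k ≥ 1 and let φ(s) = H_k'(H_k^{-1}(s)) H_k^{-1}(s) for 0 < s < 1. Then lim_{a→0+} [ sup_{0 ≤ h ≤ a} sup_{0 ≤ s ≤ 1−h} |φ(s+h) − φ(s)| ] / (a log(1/a)) = 1. -/

import Mathlib

/-!
Write `ψ(x) = H_k'(x) x`, so that `φ = ψ ∘ H_k⁻¹`. Since `ψ'(x) = (k - x) H_k'(x)`, the function
`ψ - (k - y) H_k` is maximal on `[0, ∞)` at `y`, and letting the other point tend to `∞` also
`-ψ(y) ≤ (k - y) (1 - H_k(y))`. In the variable `s = H_k(x)` this says that `k - H_k⁻¹(s)` is a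
supergradient of `φ` at every `s < 1`, so `φ` is concave on `[0, 1]`, vanishes at both ends,
satisfies `φ(h) ≤ k h` and decreases on `[H_k(k), 1]`. For a concave function vanishing at
`0` and `1`, the increments over a step `h` lie between `-φ(1 - h)` and `φ(h)`; hence the
modulus of continuity at `a` lies between `φ(1 - a)` and `φ(1 - a) + k a`, the lower bound
being attained at `s = 1 - a`. Finally, with `z = H_k⁻¹(1 - a)` one has
`a = e^{-z} ∑_{j<k} z^j / j!`, and `φ(1 - a) = z^k e^{-z} / (k-1)! ∼ a log (1 / a)` as `z → ∞`.
-/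

open Real MeasureTheory Filter Set

/-- CDF of the Gamma(k,1) distribution with integer shape `k ≥ 1`. -/
noncomputable def Hgamma (k : ℕ) (x : ℝ) : ℝ :=
  ∫ t in (0:ℝ)..x, t ^ (k - 1) * Real.exp (-t) / (Nat.factorial (k - 1) : ℝ)

/-- Density of the Gamma(k,1) distribution. -/
noncomputable def Hpdf (k : ℕ) (x : ℝ) : ℝ :=
  x ^ (k - 1) * Real.exp (-x) / (Nat.factorial (k - 1) : ℝ)

open Topology
open scoped Nat

noncomputable def expPartialSum (n : ℕ) (x : ℝ) : ℝ :=
  ∑ j ∈ Finset.range n, x ^ j / j !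

noncomputable def psi (k : ℕ) (x : ℝ) : ℝ := Hpdf k x * x

lemma continuous_Hpdf (k : ℕ) : Continuous (Hpdf k) := by
  unfold Hpdf; fun_prop

lemma Hpdf_nonneg {k : ℕ} {x : ℝ} (hx : 0 ≤ x) : 0 ≤ Hpdf k x := by
  unfold Hpdf; positivity

lemma Hpdf_pos {k : ℕ} {x : ℝ} (hx : 0 < x) : 0 < Hpdf k x := by
  unfold Hpdf; positivity

lemma psi_nonneg {k : ℕ} {x : ℝ} (hx : 0 ≤ x) : 0 ≤ psi k x :=
  mul_nonneg (Hpdf_nonneg hx) hx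

lemma hasDerivAt_Hgamma (k : ℕ) (x : ℝ) : HasDerivAt (Hgamma k) (Hpdf k x) x :=
  ((continuous_Hpdf k).integral_hasStrictDerivAt 0 x).hasDerivAt

lemma Hgamma_zero {k : ℕ} : Hgamma k 0 = 0 :=
  intervalIntegral.integral_same

lemma strictMonoOn_Hgamma (k : ℕ) : StrictMonoOn (Hgamma k) (Ici 0) :=
  strictMonoOn_of_hasDerivWithinAt_pos (convex_Ici 0)
    (fun x _ => (hasDerivAt_Hgamma k x).continuousAt.continuousWithinAt)
    (fun x _ => (hasDerivAt_Hgamma k x).hasDerivWithinAt)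
    (fun x hx => Hpdf_pos (by simpa using hx))

section ClosedForm

variable (n : ℕ)

lemma Hpdf_succ (x : ℝ) : Hpdf (n + 1) x = x ^ n * exp (-x) / n ! := by
  simp [Hpdf]

lemma psi_succ (x : ℝ) : psi (n + 1) x = x ^ (n + 1) * exp (-x) / n ! := by
  rw [psi, Hpdf_succ]; ring

lemma hasDerivAt_exp_neg_mul_expPartialSum (x : ℝ) :
    HasDerivAt (fun t => exp (-t) * expPartialSum (n + 1) t) (-Hpdf (n + 1) x) x := by
  induction n with
  | zero => simpa [expPartialSum, Hpdf] using (hasDerivAt_neg' x).exp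
  | succ n ih =>
    have hterm : HasDerivAt (fun t => exp (-t) * (t ^ (n + 1) / (n + 1)!))
        (-exp (-x) * (x ^ (n + 1) / (n + 1)!) + exp (-x) * ((n + 1 : ℕ) * x ^ n / (n + 1)!)) x :=
      ((hasDerivAt_neg' x).exp.mul ((hasDerivAt_pow (n + 1) x).div_const _)).congr_deriv
        (by simp)
    have hsplit : (fun t => exp (-t) * expPartialSum (n + 1 + 1) t) =
        fun t => exp (-t) * expPartialSum (n + 1) t + exp (-t) * (t ^ (n + 1) / (n + 1)!) := by
      funext t; rw [expPartialSum, Finset.sum_range_succ, mul_add]; rfl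
    rw [hsplit]
    refine (ih.add hterm).congr_deriv ?_
    rw [Hpdf_succ, Hpdf_succ, Nat.factorial_succ]
    push_cast
    field_simp
    ring

lemma one_sub_Hgamma (x : ℝ) : 1 - Hgamma (n + 1) x = exp (-x) * expPartialSum (n + 1) x := by
  have hFTC : ∫ t in (0 : ℝ)..x, Hpdf (n + 1) t =
      -(exp (-x) * expPartialSum (n + 1) x) - -(exp (-0) * expPartialSum (n + 1) 0) :=
    intervalIntegral.integral_eq_sub_of_hasDerivAt
      (fun t _ => (hasDerivAt_exp_neg_mul_expPartialSum n t).neg.congr_deriv (neg_neg _))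
      ((continuous_Hpdf _).intervalIntegrable 0 x)
  change 1 - ∫ t in (0 : ℝ)..x, Hpdf (n + 1) t = _
  rw [hFTC]
  simp [expPartialSum, Finset.sum_range_succ']

lemma one_le_expPartialSum {x : ℝ} (hx : 0 ≤ x) : 1 ≤ expPartialSum (n + 1) x := by
  rw [expPartialSum, Finset.sum_range_succ']
  simpa using Finset.sum_nonneg fun i _ => by positivity

lemma Hgamma_lt_one {x : ℝ} (hx : 0 ≤ x) : Hgamma (n + 1) x < 1 := by
  have := one_sub_Hgamma n x
  have := one_le_expPartialSum n hx
  nlinarith [exp_pos (-x)]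

lemma tendsto_Hgamma_atTop : Tendsto (Hgamma (n + 1)) atTop (𝓝 1) := by
  have h : Tendsto (fun x => exp (-x) * expPartialSum (n + 1) x) atTop (𝓝 0) := by
    simp_rw [expPartialSum, Finset.mul_sum]
    simpa using tendsto_finsetSum (Finset.range (n + 1)) fun j _ =>
      ((tendsto_pow_mul_exp_neg_atTop_nhds_zero j).div_const (j ! : ℝ)).congr fun x => by ring
  simpa using (h.const_sub 1).congr fun x => by rw [← one_sub_Hgamma]; ring

lemma hasDerivAt_psi (x : ℝ) : HasDerivAt (psi (n + 1)) ((n + 1 - x) * Hpdf (n + 1) x) x := by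
  rw [show psi (n + 1) = _ from funext (psi_succ n)]
  refine (((hasDerivAt_pow (n + 1) x).mul (hasDerivAt_neg' x).exp).div_const (n ! : ℝ)).congr_deriv
    ?_
  rw [Hpdf_succ, Nat.add_sub_cancel]; push_cast; ring

lemma tendsto_psi_atTop : Tendsto (psi (n + 1)) atTop (𝓝 0) := by
  rw [show psi (n + 1) = _ from funext (psi_succ n)]
  simpa using (tendsto_pow_mul_exp_neg_atTop_nhds_zero (n + 1)).div_const (n ! : ℝ)

end ClosedForm

section Supergradient

variable (n : ℕ)

lemma psi_sub_le {y w : ℝ} (hy : 0 ≤ y) (hw : 0 ≤ w) :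
    psi (n + 1) w - psi (n + 1) y ≤ (n + 1 - y) * (Hgamma (n + 1) w - Hgamma (n + 1) y) := by
  set χ := fun t => psi (n + 1) t - (n + 1 - y) * Hgamma (n + 1) t
  have hχ : ∀ t, HasDerivAt χ ((y - t) * Hpdf (n + 1) t) t := fun t =>
    ((hasDerivAt_psi n t).sub ((hasDerivAt_Hgamma _ t).const_mul _)).congr_deriv (by ring)
  have hχc : ContinuousOn χ univ := fun t _ => (hχ t).continuousAt.continuousWithinAt
  suffices χ w ≤ χ y by simp only [χ] at this; linarith
  rcases le_total w y with hwy | hyw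
  · refine monotoneOn_of_hasDerivWithinAt_nonneg (convex_Icc 0 y) (hχc.mono (subset_univ _))
      (fun t _ => (hχ t).hasDerivWithinAt) (fun t ht => ?_) ⟨hw, hwy⟩ ⟨hy, le_rfl⟩ hwy
    rw [interior_Icc] at ht
    exact mul_nonneg (by linarith [ht.2]) (Hpdf_nonneg ht.1.le)
  · refine antitoneOn_of_hasDerivWithinAt_nonpos (convex_Ici y) (hχc.mono (subset_univ _))
      (fun t _ => (hχ t).hasDerivWithinAt) (fun t ht => ?_) (mem_Ici.2 le_rfl) hyw hyw
    rw [interior_Ici] at ht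
    exact mul_nonpos_of_nonpos_of_nonneg (by linarith [mem_Ioi.1 ht])
      (Hpdf_nonneg (hy.trans (mem_Ioi.1 ht).le))

lemma neg_psi_le {y : ℝ} (hy : 0 ≤ y) :
    -psi (n + 1) y ≤ (n + 1 - y) * (1 - Hgamma (n + 1) y) := by
  have hlim := ((tendsto_psi_atTop n).sub_const (psi (n + 1) y)).sub
    (((tendsto_Hgamma_atTop n).sub_const (Hgamma (n + 1) y)).const_mul (n + 1 - y))
  have := le_of_tendsto hlim <| (eventually_ge_atTop 0).mono fun w hw =>
    sub_nonpos.2 (psi_sub_le n hy hw)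
  linarith

end Supergradient

theorem ConcaveOn.add_le_add_of_add_eq {s : Set ℝ} {f : ℝ → ℝ} (hf : ConcaveOn ℝ s f)
    {x y u v : ℝ} (hx : x ∈ s) (hy : y ∈ s) (hu : u ∈ Icc x y) (huv : u + v = x + y) :
    f x + f y ≤ f u + f v := by
  rcases hu.1.eq_or_lt with rfl | hxu
  · rw [show v = y by linarith]
  have hxy : 0 < y - x := by linarith [hu.2]
  set t := (u - x) / (y - x)
  have ht0 : 0 ≤ t := div_nonneg (by linarith) hxy.le
  have ht1 : t ≤ 1 := (div_le_one hxy).2 (by linarith [hu.2])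
  have hu' : (1 - t) * x + t * y = u := by simp only [t]; field_simp; ring
  have hv' : t * x + (1 - t) * y = v := by
    rw [show v = x + y - u by linarith]; simp only [t]; field_simp; ring
  have h1 := hf.2 hx hy (sub_nonneg.2 ht1) ht0 (by ring)
  have h2 := hf.2 hx hy ht0 (sub_nonneg.2 ht1) (by ring)
  simp only [smul_eq_mul, hu', hv'] at h1 h2
  linarith

theorem ConcaveOn.abs_add_sub_le_max {f : ℝ → ℝ} (hf : ConcaveOn ℝ (Icc 0 1) f) (h0 : f 0 = 0)
    (h1 : f 1 = 0) {s h : ℝ} (hs : 0 ≤ s) (hh : 0 ≤ h) (hsh : s + h ≤ 1) :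
    |f (s + h) - f s| ≤ max (f h) (f (1 - h)) := by
  have hlow := hf.add_le_add_of_add_eq (u := s + h) (v := 1 - h) ⟨hs, by linarith⟩
    ⟨by linarith, le_rfl⟩ ⟨by linarith, hsh⟩ (by ring)
  have hup := hf.add_le_add_of_add_eq (u := h) (v := s) ⟨le_rfl, zero_le_one⟩ ⟨by linarith, hsh⟩
    ⟨hh, by linarith⟩ (by ring)
  rw [abs_le]
  constructor <;> linarith [le_max_left (f h) (f (1 - h)), le_max_right (f h) (f (1 - h))]

noncomputable def modulusOfContinuity (f : ℝ → ℝ) (a : ℝ) : ℝ :=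
  sSup ((fun p : ℝ × ℝ => |f (p.2 + p.1) - f p.2|) ''
    {p : ℝ × ℝ | 0 ≤ p.1 ∧ p.1 ≤ a ∧ 0 ≤ p.2 ∧ p.2 ≤ 1 - p.1})

section Quantile

variable {n : ℕ} {Hinv : ℝ → ℝ}
  (hinv : ∀ s ∈ Ioo (0 : ℝ) 1, Hgamma (n + 1) (Hinv s) = s ∧ 0 < Hinv s) (hinv0 : Hinv 0 = 0)
  (hext1 : Hpdf (n + 1) (Hinv 1) * Hinv 1 = 0)
include hinv

lemma tendsto_Hinv_one_sub : Tendsto (fun a => Hinv (1 - a)) (𝓝[>] 0) atTop := by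
  refine tendsto_atTop.2 fun b => ?_
  have hm : Hgamma (n + 1) (max b 0) < 1 := Hgamma_lt_one n (le_max_right b 0)
  filter_upwards [Ioo_mem_nhdsGT (sub_pos.2 hm), Ioo_mem_nhdsGT one_pos] with a ha ha'
  obtain ⟨hH, hpos⟩ := hinv (1 - a) ⟨by linarith [ha'.2], by linarith [ha.1]⟩
  have hlt : max b 0 < Hinv (1 - a) := ((strictMonoOn_Hgamma (n + 1)).lt_iff_lt
    (mem_Ici.2 (le_max_right b 0)) (mem_Ici.2 hpos.le)).1 (by linarith [ha.2])
  exact (le_max_left b 0).trans hlt.le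

include hinv0

lemma Hinv_spec {s : ℝ} (hs : s ∈ Ico 0 1) : 0 ≤ Hinv s ∧ Hgamma (n + 1) (Hinv s) = s := by
  rcases hs.1.eq_or_lt with rfl | hs0
  · exact ⟨hinv0.ge, by rw [hinv0, Hgamma_zero]⟩
  · exact ⟨(hinv s ⟨hs0, hs.2⟩).2.le, (hinv s ⟨hs0, hs.2⟩).1⟩

include hext1

lemma psi_Hinv_sub_le {s t : ℝ} (hs : s ∈ Ico 0 1) (ht : t ∈ Icc 0 1) :
    psi (n + 1) (Hinv t) - psi (n + 1) (Hinv s) ≤ (n + 1 - Hinv s) * (t - s) := by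
  obtain ⟨hs0, hHs⟩ := Hinv_spec hinv hinv0 hs
  rcases ht.2.lt_or_eq with ht1 | rfl
  · obtain ⟨ht0, hHt⟩ := Hinv_spec hinv hinv0 ⟨ht.1, ht1⟩
    simpa only [hHs, hHt] using psi_sub_le n hs0 ht0
  · have hφ1 : psi (n + 1) (Hinv 1) = 0 := hext1
    simpa only [hφ1, zero_sub, hHs] using neg_psi_le n hs0

lemma concaveOn_psi_Hinv : ConcaveOn ℝ (Icc 0 1) (fun s => psi (n + 1) (Hinv s)) :=
  concaveOn_of_slope_anti_adjacent (convex_Icc 0 1) fun {x y z} hx hz hxy hyz => by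
    have hy : y ∈ Ico 0 1 := ⟨hx.1.trans hxy.le, hyz.trans_le hz.2⟩
    have hleft := psi_Hinv_sub_le hinv hinv0 hext1 hy hx
    calc _ ≤ (n + 1 - Hinv y) :=
          (div_le_iff₀ (sub_pos.2 hyz)).2 (psi_Hinv_sub_le hinv hinv0 hext1 hy hz)
      _ ≤ _ := (le_div_iff₀ (sub_pos.2 hxy)).2 (by linarith)

lemma abs_psi_Hinv_add_sub_le {a h s : ℝ} (ha : a ∈ Ioo 0 1)
    (hak : Hgamma (n + 1) (n + 1) ≤ 1 - a) (hh : h ∈ Icc 0 a) (hs : 0 ≤ s) (hsh : s + h ≤ 1) :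
    |psi (n + 1) (Hinv (s + h)) - psi (n + 1) (Hinv s)| ≤
      psi (n + 1) (Hinv (1 - a)) + (n + 1) * a := by
  have hk : (0 : ℝ) < n + 1 := by positivity
  have hz : 1 - a ∈ Ico 0 1 := ⟨by linarith [ha.2], by linarith [ha.1]⟩
  obtain ⟨hz0, hHz⟩ := Hinv_spec hinv hinv0 hz
  have hkz : (n + 1 : ℝ) ≤ Hinv (1 - a) :=
    ((strictMonoOn_Hgamma (n + 1)).le_iff_le (mem_Ici.2 hk.le) (mem_Ici.2 hz0)).1 (by rwa [hHz])
  have hφ0 : psi (n + 1) (Hinv 0) = 0 := by simp [hinv0, psi]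
  have hleft : psi (n + 1) (Hinv h) ≤ (n + 1) * a := by
    have := psi_Hinv_sub_le hinv hinv0 hext1 ⟨le_rfl, one_pos⟩ ⟨hh.1, by linarith⟩
    rw [hφ0, hinv0] at this
    nlinarith [hh.2]
  have hright : psi (n + 1) (Hinv (1 - h)) ≤ psi (n + 1) (Hinv (1 - a)) := by
    have := psi_Hinv_sub_le hinv hinv0 hext1 hz (t := 1 - h)
      ⟨by linarith [hh.2], by linarith [hh.1]⟩
    nlinarith [hh.2]
  have hφz := psi_nonneg (k := n + 1) hz0
  calc _ ≤ max (psi (n + 1) (Hinv h)) (psi (n + 1) (Hinv (1 - h))) :=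
        (concaveOn_psi_Hinv hinv hinv0 hext1).abs_add_sub_le_max hφ0 hext1 hs hh.1 hsh
    _ ≤ _ := max_le (by linarith) (by linarith [mul_pos hk ha.1])

lemma modulusOfContinuity_psi_Hinv_mem_Icc {a : ℝ} (ha : a ∈ Ioo 0 1)
    (hak : Hgamma (n + 1) (n + 1) ≤ 1 - a) :
    modulusOfContinuity (fun s => psi (n + 1) (Hinv s)) a ∈
      Icc (psi (n + 1) (Hinv (1 - a))) (psi (n + 1) (Hinv (1 - a)) + (n + 1) * a) := by
  refine ⟨le_csSup ⟨_, ?bound⟩ ?witness, csSup_le ⟨_, ?witness⟩ ?bound⟩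
  case bound =>
    rintro _ ⟨p, ⟨hh0, hha, hs0, hs1⟩, rfl⟩
    exact abs_psi_Hinv_add_sub_le hinv hinv0 hext1 ha hak ⟨hh0, hha⟩ hs0 (by linarith)
  case witness =>
    refine ⟨(a, 1 - a), ⟨ha.1.le, le_rfl, by linarith [ha.2], le_rfl⟩, ?_⟩
    have hφ1 : psi (n + 1) (Hinv 1) = 0 := hext1
    obtain ⟨hz0, -⟩ := Hinv_spec hinv hinv0 (s := 1 - a) ⟨by linarith [ha.2], by linarith [ha.1]⟩
    dsimp only
    rw [sub_add_cancel, hφ1, zero_sub, abs_neg, abs_of_nonneg (psi_nonneg hz0)]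

end Quantile

section Asymptotics

variable (n : ℕ)

lemma tendsto_expPartialSum_div_pow :
    Tendsto (fun x => expPartialSum (n + 1) x / x ^ n) atTop (𝓝 (1 / n !)) := by
  have hlow : Tendsto (fun x : ℝ => ∑ j ∈ Finset.range n, x ^ j / x ^ n / j ! + 1 / n !) atTop
      (𝓝 (1 / n !)) := by
    simpa using (tendsto_finsetSum (Finset.range n) fun j hj =>
      (tendsto_pow_div_pow_atTop_zero (Finset.mem_range.1 hj)).div_const (j ! : ℝ)).add_const _
  refine hlow.congr' ?_
  filter_upwards [eventually_gt_atTop 0] with x hx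
  rw [expPartialSum, Finset.sum_range_succ, add_div, Finset.sum_div]
  congr 1
  · exact Finset.sum_congr rfl fun j _ => by ring
  · field_simp

lemma tendsto_log_expPartialSum_div :
    Tendsto (fun x => log (expPartialSum (n + 1) x) / x) atTop (𝓝 0) := by
  have h : Tendsto (fun x => log (expPartialSum (n + 1) x / x ^ n) / x + n * (log x / x)) atTop
      (𝓝 0) := by
    simpa using (((tendsto_expPartialSum_div_pow n).log (by positivity)).div_atTop tendsto_id).add
      (isLittleO_log_id_atTop.tendsto_div_nhds_zero.const_mul (n : ℝ))
  refine h.congr' ?_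
  filter_upwards [eventually_gt_atTop 0] with x hx
  rw [log_div (one_le_expPartialSum n hx.le |> zero_lt_one.trans_le).ne' (by positivity), log_pow]
  ring

lemma tendsto_psi_div_tail_mul_log :
    Tendsto (fun z => psi (n + 1) z /
      ((1 - Hgamma (n + 1) z) * log (1 / (1 - Hgamma (n + 1) z)))) atTop (𝓝 1) := by
  have h1 : Tendsto (fun z => (n ! * (expPartialSum (n + 1) z / z ^ n))⁻¹) atTop (𝓝 1) := by
    simpa [Nat.factorial_ne_zero] using
      ((tendsto_expPartialSum_div_pow n).const_mul (n ! : ℝ)).inv₀ (by positivity)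
  have h2 : Tendsto (fun z => (1 - log (expPartialSum (n + 1) z) / z)⁻¹) atTop (𝓝 1) := by
    simpa using ((tendsto_log_expPartialSum_div n).const_sub 1).inv₀ (by norm_num)
  have h := h1.mul h2
  rw [mul_one] at h
  refine h.congr' ?_
  filter_upwards [eventually_gt_atTop 0,
    (tendsto_log_expPartialSum_div n).eventually_lt_const one_pos] with z hz hlog
  have hS := (one_le_expPartialSum n hz.le |> zero_lt_one.trans_le)
  have hlog' : z - log (expPartialSum (n + 1) z) ≠ 0 := by
    rw [div_lt_one hz] at hlog; linarith
  rw [one_sub_Hgamma, psi_succ, one_div, log_inv, log_mul (exp_pos _).ne' hS.ne', log_exp,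
    neg_add_eq_sub, neg_sub]
  field_simp
  ring

end Asymptotics

lemma tendsto_psi_Hinv_one_sub_div {n : ℕ} {Hinv : ℝ → ℝ}
    (hinv : ∀ s ∈ Ioo (0 : ℝ) 1, Hgamma (n + 1) (Hinv s) = s ∧ 0 < Hinv s) :
    Tendsto (fun a => psi (n + 1) (Hinv (1 - a)) / (a * log (1 / a))) (𝓝[>] 0) (𝓝 1) := by
  refine ((tendsto_psi_div_tail_mul_log n).comp (tendsto_Hinv_one_sub hinv)).congr' ?_
  filter_upwards [Ioo_mem_nhdsGT one_pos] with a ha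
  rw [Function.comp_apply, (hinv (1 - a) ⟨by linarith [ha.2], by linarith [ha.1]⟩).1,
    sub_sub_cancel]

theorem stmt15 (k : ℕ) (hk : 1 ≤ k) (Hinv : ℝ → ℝ)
    (hinv : ∀ s ∈ Set.Ioo (0:ℝ) 1, Hgamma k (Hinv s) = s ∧ 0 < Hinv s)
    (hinv0 : Hinv 0 = 0) (hext1 : Hpdf k (Hinv 1) * Hinv 1 = 0) :
    Filter.Tendsto
      (fun a =>
        sSup ((fun p : ℝ × ℝ =>
            |Hpdf k (Hinv (p.2 + p.1)) * Hinv (p.2 + p.1)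
              - Hpdf k (Hinv p.2) * Hinv p.2|) ''
          {p : ℝ × ℝ | 0 ≤ p.1 ∧ p.1 ≤ a ∧ 0 ≤ p.2 ∧ p.2 ≤ 1 - p.1})
          / (a * Real.log (1 / a)))
      (nhdsWithin 0 (Set.Ioi 0)) (nhds 1) := by
  obtain ⟨n, rfl⟩ : ∃ n, k = n + 1 := ⟨k - 1, by omega⟩
  change Tendsto (fun a => modulusOfContinuity (fun s => psi (n + 1) (Hinv s)) a /
    (a * log (1 / a))) (𝓝[>] 0) (𝓝 1)
  have hlower := tendsto_psi_Hinv_one_sub_div hinv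
  have hrem : Tendsto (fun a : ℝ => (n + 1) / log (1 / a)) (𝓝[>] 0) (𝓝 0) :=
    tendsto_const_nhds.div_atTop <| (tendsto_log_atTop.comp tendsto_inv_nhdsGT_zero).congr
      fun a => by rw [Function.comp_apply, one_div]
  have hupper := hlower.add hrem
  rw [add_zero] at hupper
  have hk : Hgamma (n + 1) (n + 1) < 1 := Hgamma_lt_one n (by positivity)
  have hbounds : ∀ᶠ a in 𝓝[>] 0, 0 < a ∧ 0 < log (1 / a) ∧
      modulusOfContinuity (fun s => psi (n + 1) (Hinv s)) a ∈
        Icc (psi (n + 1) (Hinv (1 - a))) (psi (n + 1) (Hinv (1 - a)) + (n + 1) * a) := by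
    filter_upwards [Ioo_mem_nhdsGT (sub_pos.2 hk), Ioo_mem_nhdsGT one_pos] with a ha ha'
    exact ⟨ha'.1, log_pos (one_lt_one_div ha'.1 ha'.2),
      modulusOfContinuity_psi_Hinv_mem_Icc hinv hinv0 hext1 ha' (by linarith [ha.2])⟩
  refine tendsto_of_tendsto_of_tendsto_of_le_of_le' hlower hupper ?_ ?_ <;>
    filter_upwards [hbounds] with a ⟨ha, hlog, hω⟩
  · exact div_le_div_of_nonneg_right hω.1 (mul_pos ha hlog).le
  · calc _ ≤ (psi (n + 1) (Hinv (1 - a)) + (n + 1) * a) / (a * log (1 / a)) :=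
          div_le_div_of_nonneg_right hω.2 (mul_pos ha hlog).le
      _ = _ := by rw [add_div, mul_comm _ a, mul_div_mul_left _ _ ha.ne']
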